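/- arXiv:0807.1407 — 5 statements merged into one kernel-verified Lean document; each statement's English description precedes it below -/
import Mathlib

section
/- For every l ∈ R^×, the kernel of the canonical projection π_l : R̂ → R/(l), (r_m)_m ↦ r_l, equals l·R̂ = { l·x : x ∈ R̂ }. -/
/-! The profinite completion `R̂` of an integral domain `R` (not a field, with all
nonzero principal ideals of finite index) is a compact topological space. -/

/-- The index set `R^× = R \ {0}`. -/
abbrev Rx (R : Type*) [CommRing R] := {m : R // m ≠ 0}

/-- Each finite quotient `R/(m)` carries the discrete topology. -/
instance quotTop (R : Type*) [CommRing R] (m : R) :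
    TopologicalSpace (R ⧸ Ideal.span {m}) := ⊥

theorem span_mul_le (R : Type*) [CommRing R] (l m : R) :
    Ideal.span {l * m} ≤ Ideal.span {m} :=
  Ideal.span_singleton_le_span_singleton.mpr (dvd_mul_left m l)

/-- The profinite completion `R̂` of `R`, as a subring of the product of the
quotients `R/(m)`, `m ∈ R^×`, consisting of the compatible families. -/
def Rhat (R : Type*) [CommRing R] [IsDomain R] :
    Subring (∀ m : Rx R, R ⧸ Ideal.span {(m : R)}) where
  carrier := {x | ∀ l m : Rx R,
    Ideal.Quotient.factor (span_mul_le R l m)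
      (x ⟨(l : R) * m, mul_ne_zero l.2 m.2⟩) = x m}
  mul_mem' {a b} ha hb := by
    intro l m
    rw [Pi.mul_apply, Pi.mul_apply, map_mul, ha l m, hb l m]
  one_mem' := by
    intro l m
    rw [Pi.one_apply, Pi.one_apply, map_one]
  add_mem' {a b} ha hb := by
    intro l m
    rw [Pi.add_apply, Pi.add_apply, map_add, ha l m, hb l m]
  zero_mem' := by
    intro l m
    rw [Pi.zero_apply, Pi.zero_apply, map_zero]
  neg_mem' {a} ha := by
    intro l m
    rw [Pi.neg_apply, Pi.neg_apply, map_neg, ha l m]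

/-- The diagonal map `R → R̂`, `r ↦ (r + (m))_m`, as a ring homomorphism. -/
def diagHom (R : Type*) [CommRing R] [IsDomain R] : R →+* Rhat R :=
  (Pi.ringHom fun m : Rx R => Ideal.Quotient.mk (Ideal.span {(m : R)})).codRestrict
    (Rhat R) (fun r l m => by
      exact Ideal.Quotient.factor_mk _ _)
/-- The canonical projection `π_l : R̂ → R/(l)`, `(r_m)_m ↦ r_l`. -/
def projHom (R : Type*) [CommRing R] [IsDomain R] (l : R) (hl : l ≠ 0) :
    Rhat R →+* R ⧸ Ideal.span {l} :=
  (Pi.evalRingHom (fun m : Rx R => R ⧸ Ideal.span {(m : R)}) ⟨l, hl⟩).comp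
    (Rhat R).subtype

section Aux
variable {R : Type*} [CommRing R] [IsDomain R]

/-- Compatibility of elements of `Rhat R` along arbitrary divisibility relations. -/
lemma Rhat.compat (y : Rhat R) (a b : Rx R)
    (h : Ideal.span {(b : R)} ≤ Ideal.span {(a : R)}) :
    Ideal.Quotient.factor h (y.1 b) = y.1 a := by
  obtain ⟨bv, hb⟩ := b
  obtain ⟨c, hc⟩ : (a : R) ∣ bv := Ideal.span_singleton_le_span_singleton.mp h
  have hc' : bv = c * (a : R) := by rw [hc]; ring
  subst hc'
  exact y.2 ⟨c, fun h0 => hb (by rw [h0, zero_mul])⟩ a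

/-- Cancellation in quotients: if `l*a ≡ l*b mod (l*m)` then `a ≡ b mod (m)`. -/
lemma quot_cancel {l m a b : R} (hl : l ≠ 0)
    (h : Ideal.Quotient.mk (Ideal.span {l * m}) (l * a) =
      Ideal.Quotient.mk (Ideal.span {l * m}) (l * b)) :
    Ideal.Quotient.mk (Ideal.span {m}) a = Ideal.Quotient.mk (Ideal.span {m}) b := by
  rw [Ideal.Quotient.eq, Ideal.mem_span_singleton] at h ⊢
  have : l * m ∣ l * (a - b) := by rw [mul_sub]; exact h
  exact (mul_dvd_mul_iff_left hl).mp this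

end Aux

/-- for every `l ∈ R^×`, the kernel of the canonical projection
`π_l : R̂ → R/(l)` equals `l·R̂ = { l·x : x ∈ R̂ }`. -/
theorem ker_projHom (R : Type*) [CommRing R] [IsDomain R]
    (hnf : ¬ IsField R)
    (hfin : ∀ m : R, m ≠ 0 → Finite (R ⧸ Ideal.span {m}))
    (l : R) (hl : l ≠ 0) :
    (RingHom.ker (projHom R l hl) : Set (Rhat R)) =
      {y : Rhat R | ∃ x : Rhat R, y = diagHom R l * x} := by
  ext y
  simp only [SetLike.mem_coe, RingHom.mem_ker, Set.mem_setOf_eq]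
  constructor
  · intro hy
    have hy' : y.1 ⟨l, hl⟩ = 0 := hy
    -- choose representatives
    have hzex : ∀ m : Rx R, ∃ z : R,
        Ideal.Quotient.mk (Ideal.span {l * (m : R)}) (l * z)
          = y.1 ⟨l * m, mul_ne_zero hl m.2⟩ := by
      intro m
      obtain ⟨r, hr⟩ := Ideal.Quotient.mk_surjective (y.1 ⟨l * m, mul_ne_zero hl m.2⟩)
      have hle : Ideal.span {l * (m : R)} ≤ Ideal.span {l} :=
        Ideal.span_singleton_le_span_singleton.mpr (dvd_mul_right l m)
      have hrl : Ideal.Quotient.mk (Ideal.span {l}) r = 0 := by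
        have := Rhat.compat y ⟨l, hl⟩ ⟨l * m, mul_ne_zero hl m.2⟩ hle
        rw [← hr, Ideal.Quotient.factor_mk] at this
        rw [this, hy']
      obtain ⟨z, hz⟩ := Ideal.mem_span_singleton'.mp (Ideal.Quotient.eq_zero_iff_mem.mp hrl)
      refine ⟨z, ?_⟩
      rw [mul_comm l z, hz, hr]
    choose z hz using hzex
    have key : ∀ (a m : Rx R), Ideal.Quotient.mk (Ideal.span {l * (m : R)}) (l * z a)
        = y.1 ⟨l * m, mul_ne_zero hl m.2⟩ →
        Ideal.Quotient.mk (Ideal.span {(m : R)}) (z a)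
          = Ideal.Quotient.mk (Ideal.span {(m : R)}) (z m) :=
      fun a m h => quot_cancel hl (by rw [h, hz m])
    have hxmem : (fun m : Rx R => Ideal.Quotient.mk (Ideal.span {(m : R)}) (z m)) ∈ Rhat R := by
      intro l' m
      rw [Ideal.Quotient.factor_mk (R := R)]
      refine key ⟨(l' : R) * m, mul_ne_zero l'.2 m.2⟩ m ?_
      have hle : Ideal.span {l * ((l' : R) * m)} ≤ Ideal.span {l * (m : R)} :=
        Ideal.span_singleton_le_span_singleton.mpr ⟨l', by ring⟩
      have h1 := hz ⟨(l' : R) * m, mul_ne_zero l'.2 m.2⟩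
      have h2 := Rhat.compat y ⟨l * m, mul_ne_zero hl m.2⟩
        ⟨l * ((l' : R) * m), mul_ne_zero hl (mul_ne_zero l'.2 m.2)⟩ hle
      rw [← h1, Ideal.Quotient.factor_mk] at h2
      exact h2
    refine ⟨⟨_, hxmem⟩, ?_⟩
    apply Subtype.ext
    funext m
    have hle : Ideal.span {l * (m : R)} ≤ Ideal.span {(m : R)} :=
      Ideal.span_singleton_le_span_singleton.mpr (dvd_mul_left (m : R) l)
    have h2 := Rhat.compat y m ⟨l * m, mul_ne_zero hl m.2⟩ hle
    rw [← hz m, Ideal.Quotient.factor_mk] at h2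
    have : (diagHom R l * ⟨_, hxmem⟩ : Rhat R).1 m
        = Ideal.Quotient.mk (Ideal.span {(m : R)}) (l * z m) := by
      show (diagHom R l).1 m * Ideal.Quotient.mk (Ideal.span {(m : R)}) (z m) = _
      rw [map_mul]
      rfl
    rw [this, h2]
  · rintro ⟨x, rfl⟩
    show (diagHom R l).1 ⟨l, hl⟩ * x.1 ⟨l, hl⟩ = 0
    have : (diagHom R l).1 ⟨l, hl⟩ = 0 :=
      Ideal.Quotient.eq_zero_iff_mem.mpr (Ideal.mem_span_singleton_self l)
    rw [this, zero_mul]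
end

section
/- For every m ∈ R^× and every complete set of representatives T ⊆ R of the (finitely many) cosets of the ideal (m) in R, one has Σ_{n ∈ T} U^n E_m U^{-n} = 1 in the algebra of bounded operators on ℓ²(R). -/
/-! Operators on `ℓ²(R)` associated with an integral domain `R`. -/

noncomputable section

open scoped Classical in
/-- The Hilbert space `ℓ²(R)`. -/
abbrev H (R : Type*) : Type _ := lp (fun _ : R => ℂ) 2

open scoped Classical in
/-- The standard orthonormal basis vector `ξ_r` of `ℓ²(R)`. -/
def xi {R : Type*} (r : R) : H R := lp.single 2 r 1

end

open scoped Classical in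
open scoped ComplexInnerProductSpace in
private lemma inner_xi {R : Type*} (t s : R) :
    ⟪xi t, (xi s : H R)⟫ = if t = s then 1 else 0 := by
  rw [xi, lp.inner_single_left]
  simp only [xi]
  rw [lp.single_apply]
  split_ifs with h
  · simp [Pi.single_apply, h]
  · simp [Pi.single_apply, h]

open scoped ComplexInnerProductSpace in
private lemma ext_xi {R : Type*} {y z : H R}
    (h : ∀ t : R, ⟪(xi t : H R), y⟫ = ⟪(xi t : H R), z⟫) : y = z := by
  classical
  refine lp.ext (funext fun t => ?_)
  have ht := h t
  rw [xi, lp.inner_single_left, lp.inner_single_left] at ht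
  simpa using ht

set_option synthInstance.maxHeartbeats 1000000 in
/-- for every `m ∈ R^×` and every complete set of representatives `T ⊆ R`
of the cosets of the ideal `(m)` in `R`, one has `Σ_{n ∈ T} U^n E_m U^{-n} = 1`, where
`E_m = S_m S_m^*`. -/
theorem sum_range_projections_eq_one (R : Type*) [CommRing R] [IsDomain R]
    (hnf : ¬ IsField R)
    (hfin : ∀ m : R, m ≠ 0 → Finite (R ⧸ Ideal.span {m}))
    (S U : R → H R →L[ℂ] H R)
    (hS : ∀ (m : R), m ≠ 0 → ∀ r : R, S m (xi r) = xi (m * r))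
    (hU : ∀ n r : R, U n (xi r) = xi (n + r))
    (m : R) (hm : m ≠ 0) (T : Finset R)
    (hT : ∀ c : R ⧸ Ideal.span {m},
      ∃! n, n ∈ T ∧ Ideal.Quotient.mk (Ideal.span {m}) n = c) :
    ∑ n ∈ T, U n * (S m * ContinuousLinearMap.adjoint (S m)) * U (-n) = 1 := by
  classical
  -- adjoint of S m on basis vectors
  have hadj : ∀ s : R, ContinuousLinearMap.adjoint (S m) (xi s) =
      if h : m ∣ s then xi h.choose else (0 : H R) := by
    intro s
    refine ext_xi fun t => ?_
    rw [ContinuousLinearMap.adjoint_inner_right, hS m hm, inner_xi]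
    split_ifs with h1 h2 h2
    · rw [inner_xi, if_pos]
      exact mul_left_cancel₀ hm (h1.trans h2.choose_spec)
    · exact absurd ⟨t, h1.symm⟩ h2
    · rw [inner_xi, if_neg]
      intro he
      exact h1 (by rw [he, ← h2.choose_spec])
    · simp
  -- E_m on basis vectors
  have hE : ∀ s : R, (S m * ContinuousLinearMap.adjoint (S m)) (xi s) =
      if m ∣ s then xi s else 0 := by
    intro s
    rw [ContinuousLinearMap.mul_apply, hadj]
    split_ifs with h
    · rw [hS m hm, ← h.choose_spec]
    · simp
  -- the sum applied to each basis vector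
  have key : ∀ r : R,
      (∑ n ∈ T, U n * (S m * ContinuousLinearMap.adjoint (S m)) * U (-n)) (xi r) = xi r := by
    intro r
    obtain ⟨n₀, ⟨hn₀T, hn₀⟩, huniq⟩ := hT (Ideal.Quotient.mk (Ideal.span {m}) r)
    rw [ContinuousLinearMap.sum_apply]
    have hterm : ∀ n ∈ T,
        (U n * (S m * ContinuousLinearMap.adjoint (S m)) * U (-n)) (xi r) =
          if n = n₀ then xi r else 0 := by
      intro n hnT
      have hmk : (m ∣ -n + r) ↔ Ideal.Quotient.mk (Ideal.span {m}) n =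
          Ideal.Quotient.mk (Ideal.span {m}) r := by
        rw [Ideal.Quotient.eq, Ideal.mem_span_singleton]
        constructor
        · intro h
          rw [show n - r = -(-n + r) by ring]
          exact dvd_neg.2 h
        · intro h
          rw [show -n + r = -(n - r) by ring]
          exact dvd_neg.2 h
      rw [ContinuousLinearMap.mul_apply, ContinuousLinearMap.mul_apply, hU, hE]
      split_ifs with h1 h2 h2
      · rw [hU]; congr 1; ring
      · exact absurd (huniq n ⟨hnT, hmk.1 h1⟩) h2
      · subst h2
        exact absurd (hmk.2 hn₀) h1
      · simp
    rw [Finset.sum_congr rfl hterm, Finset.sum_ite_eq' T n₀ (fun _ => xi r), if_pos hn₀T]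
  -- conclude by density of the span of the basis vectors
  let b : HilbertBasis R ℂ (H R) := HilbertBasis.ofRepr (LinearIsometryEquiv.refl ℂ (H R))
  have hb : (fun r : R => (b : R → H R) r) = xi := by
    funext r
    show (LinearIsometryEquiv.refl ℂ (H R)).symm (lp.single 2 r (1 : ℂ)) = xi r
    rfl
  have hd : Dense (Submodule.span ℂ (Set.range (xi : R → H R)) : Set (H R)) := by
    rw [Submodule.dense_iff_topologicalClosure_eq_top, ← hb]
    exact b.dense_span
  refine ContinuousLinearMap.ext_on hd ?_
  rintro x ⟨r, rfl⟩
  rw [key, ContinuousLinearMap.one_apply]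
end

section
/- For all k, m ∈ R^× and every complete set of representatives T ⊆ R of the cosets of the ideal (k) in R, one has E_m = Σ_{n ∈ T} U^{mn} E_{km} U^{-mn} in the algebra of bounded operators on ℓ²(R). -/
noncomputable section
open scoped InnerProductSpace Classical

/-- The Hilbert basis of `ℓ²(R)` given by the identity. -/
def xiBasis (R : Type*) : HilbertBasis R ℂ (H R) := ⟨LinearIsometryEquiv.refl ℂ (H R)⟩

lemma xiBasis_apply (R : Type*) (r : R) : xiBasis R r = xi r := by
  rw [← (xiBasis R).repr_symm_single]
  rfl

lemma inner_xi_xi {R : Type*} (r s : R) :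
    ⟪(xi r : H R), xi s⟫_ℂ = if r = s then 1 else 0 := by
  have h := (xiBasis R).orthonormal
  rw [orthonormal_iff_ite] at h
  simpa [xiBasis_apply] using h r s

lemma xi_ext {R : Type*} {u v : H R} (h : ∀ t : R, ⟪(xi t : H R), u⟫_ℂ = ⟪xi t, v⟫_ℂ) :
    u = v := by
  apply (xiBasis R).repr.injective
  ext t
  have h1 := (xiBasis R).repr_apply_apply u t
  have h2 := (xiBasis R).repr_apply_apply v t
  rw [h1, h2, xiBasis_apply]
  exact h t

end

set_option synthInstance.maxHeartbeats 1000000 in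
/-- for all `k, m ∈ R^×` and every complete set of representatives `T ⊆ R`
of the cosets of the ideal `(k)` in `R`, one has
`E_m = Σ_{n ∈ T} U^{mn} E_{km} U^{-mn}`, where `E_m = S_m S_m^*`. -/
theorem Em_eq_sum_conj_Ekm (R : Type*) [CommRing R] [IsDomain R]
    (hnf : ¬ IsField R)
    (hfin : ∀ m : R, m ≠ 0 → Finite (R ⧸ Ideal.span {m}))
    (S U : R → H R →L[ℂ] H R)
    (hS : ∀ (m : R), m ≠ 0 → ∀ r : R, S m (xi r) = xi (m * r))
    (hU : ∀ n r : R, U n (xi r) = xi (n + r))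
    (k m : R) (hk : k ≠ 0) (hm : m ≠ 0) (T : Finset R)
    (hT : ∀ c : R ⧸ Ideal.span {k},
      ∃! n, n ∈ T ∧ Ideal.Quotient.mk (Ideal.span {k}) n = c) :
    S m * ContinuousLinearMap.adjoint (S m) =
      ∑ n ∈ T, U (m * n) * (S (k * m) * ContinuousLinearMap.adjoint (S (k * m))) *
        U (-(m * n)) := by
  classical
  open scoped InnerProductSpace in
  -- adjoint on basis vectors
  have adj_mul : ∀ (c : R), c ≠ 0 → ∀ s : R,
      ContinuousLinearMap.adjoint (S c) (xi (c * s)) = xi s := by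
    intro c hc s
    apply xi_ext
    intro t
    rw [ContinuousLinearMap.adjoint_inner_right, hS c hc t, inner_xi_xi, inner_xi_xi]
    simp [mul_right_inj' hc]
  have adj_nd : ∀ (c : R), c ≠ 0 → ∀ r : R, ¬ c ∣ r →
      ContinuousLinearMap.adjoint (S c) (xi r) = 0 := by
    intro c hc r hdvd
    apply xi_ext
    intro t
    rw [ContinuousLinearMap.adjoint_inner_right, hS c hc t, inner_xi_xi]
    rw [if_neg (fun h => hdvd ⟨t, h.symm⟩)]
    simp
  have hkm : k * m ≠ 0 := mul_ne_zero hk hm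
  -- equality on basis vectors
  apply ContinuousLinearMap.ext_on
    (s := Set.range (xi : R → H R))
    (by
      have := (xiBasis R).dense_span
      have hr : Set.range (xiBasis R) = Set.range (xi : R → H R) := by
        ext x; constructor <;> rintro ⟨r, rfl⟩ <;> exact ⟨r, by rw [xiBasis_apply]⟩
      rw [hr] at this
      exact Submodule.dense_iff_topologicalClosure_eq_top.mpr this)
  rintro _ ⟨r, rfl⟩
  rw [ContinuousLinearMap.sum_apply]
  have term_eval : ∀ n : R, (U (m * n) * (S (k * m) *
      ContinuousLinearMap.adjoint (S (k * m))) * U (-(m * n))) (xi r) =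
      U (m * n) (S (k * m) (ContinuousLinearMap.adjoint (S (k * m)) (xi (-(m * n) + r)))) := by
    intro n
    simp [ContinuousLinearMap.mul_apply, hU]
  by_cases hdvd : m ∣ r
  · obtain ⟨s, rfl⟩ := hdvd
    -- LHS
    rw [ContinuousLinearMap.mul_apply, adj_mul m hm s, hS m hm s]
    -- RHS
    obtain ⟨n0, ⟨hn0T, hn0⟩, huniq⟩ := hT (Ideal.Quotient.mk (Ideal.span {k}) s)
    rw [Finset.sum_eq_single_of_mem n0 hn0T]
    · -- the term at n0
      rw [term_eval]
      have hk0 : k ∣ s - n0 := by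
        rw [Ideal.Quotient.eq] at hn0
        rw [Ideal.mem_span_singleton] at hn0
        exact (dvd_sub_comm).mp hn0
      obtain ⟨q, hq⟩ := hk0
      have he : -(m * n0) + m * s = k * m * q := by
        rw [show k * m * q = m * (k * q) by ring, ← hq]; ring
      rw [he, adj_mul _ hkm, hS _ hkm, hU]
      congr 1
      rw [show k * m * q = m * (k * q) by ring, ← hq]; ring
    · intro n hnT hne
      rw [term_eval]
      have hnd : ¬ (k * m) ∣ (-(m * n) + m * s) := by
        intro hd
        have : m * k ∣ m * (s - n) := by
          rw [show m * (s - n) = -(m * n) + m * s by ring, show m * k = k * m by ring]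
          exact hd
        rw [mul_dvd_mul_iff_left hm] at this
        have : Ideal.Quotient.mk (Ideal.span {k}) n = Ideal.Quotient.mk (Ideal.span {k}) s := by
          rw [Ideal.Quotient.eq, Ideal.mem_span_singleton]
          exact dvd_sub_comm.mp this
        exact hne (huniq n ⟨hnT, this⟩)
      rw [adj_nd _ hkm _ hnd]
      simp
  · -- LHS is zero
    rw [ContinuousLinearMap.mul_apply, adj_nd m hm r hdvd]
    rw [map_zero]
    symm
    apply Finset.sum_eq_zero
    intro n hn
    rw [term_eval]
    have hnd : ¬ (k * m) ∣ (-(m * n) + r) := by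
      rintro ⟨q, hq⟩
      exact hdvd ⟨n + k * q, by rw [show r = m * n + k * m * q by rw [← hq]; ring]; ring⟩
    rw [adj_nd _ hkm _ hnd]
    simp
end

section
/- Let R be an integral domain which is not a field, let M ∈ R \ {0}, let n_1, …, n_N ∈ R, and let T be a finite subset of (R \ {0}) × (R \ {0}) × R × R such that every (m, m', n, n') ∈ T satisfies (m, n) ≠ (m', n'). Then there exist ν_1, …, ν_N ∈ R and μ ∈ R \ {0} such that: (i) ν_i − n_i ∈ (M) for all 1 ≤ i ≤ N; (ii) μ ∈ (M); and (iii) for every 1 ≤ i ≤ N and every (m, m', n, n') ∈ T, the element n − n' + ν_i·(m' − m) does not lie in the ideal (μ). -/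
/-- let `R` be an integral domain which is not a field, `M ∈ R \ {0}`,
`n_1, …, n_N ∈ R`, and let `T` be a finite subset of `(R \ {0}) × (R \ {0}) × R × R`
such that every `(m, m', n, n') ∈ T` satisfies `(m, n) ≠ (m', n')`. Then there exist
`ν_1, …, ν_N ∈ R` and `μ ∈ R \ {0}` with: (i) `ν_i − n_i ∈ (M)` for all `i`;
(ii) `μ ∈ (M)`; (iii) for every `i` and every `(m, m', n, n') ∈ T`, the element
`n − n' + ν_i·(m' − m)` does not lie in `(μ)`. -/
theorem exists_nu_mu (R : Type*) [CommRing R] [IsDomain R] (hnf : ¬ IsField R)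
    (M : R) (hM : M ≠ 0) (N : ℕ) (n : Fin N → R)
    (T : Finset (R × R × R × R))
    (hT : ∀ x ∈ T, x.1 ≠ 0 ∧ x.2.1 ≠ 0 ∧ (x.1, x.2.2.1) ≠ (x.2.1, x.2.2.2)) :
    ∃ (ν : Fin N → R) (μ : R), μ ≠ 0 ∧
      (∀ i : Fin N, ν i - n i ∈ Ideal.span {M}) ∧
      μ ∈ Ideal.span {M} ∧
      ∀ i : Fin N, ∀ x ∈ T,
        x.2.2.1 - x.2.2.2 + ν i * (x.2.1 - x.1) ∉ Ideal.span {μ} := by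
  haveI : Infinite R := by
    rw [← not_finite_iff_infinite]
    intro h
    exact hnf (Finite.isField_of_domain R)
  -- construct ν
  have hν : ∀ i : Fin N, ∃ ν : R, ν - n i ∈ Ideal.span {M} ∧
      ∀ x ∈ T, x.2.2.1 - x.2.2.2 + ν * (x.2.1 - x.1) ≠ 0 := by
    intro i
    have hfin : (⋃ x ∈ T, {k : R | x.2.1 - x.1 ≠ 0 ∧
        x.2.2.1 - x.2.2.2 + (n i + k * M) * (x.2.1 - x.1) = 0}).Finite := by
      apply Set.Finite.biUnion T.finite_toSet
      intro x hx
      apply Set.Subsingleton.finite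
      rintro k1 ⟨hd, h1⟩ k2 ⟨-, h2⟩
      have h3 : (k1 - k2) * (M * (x.2.1 - x.1)) = 0 := by linear_combination h1 - h2
      rcases mul_eq_zero.mp h3 with h | h
      · exact sub_eq_zero.mp h
      · exact absurd h (mul_ne_zero hM hd)
    obtain ⟨k, hk⟩ := hfin.infinite_compl.nonempty
    refine ⟨n i + k * M, Ideal.mem_span_singleton.mpr ⟨k, by ring⟩, ?_⟩
    intro x hx heq
    by_cases hd : x.2.1 - x.1 = 0
    · obtain ⟨-, -, hne⟩ := hT x hx
      have hm : x.2.1 = x.1 := sub_eq_zero.mp hd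
      rw [hd, mul_zero, add_zero, sub_eq_zero] at heq
      exact hne (Prod.ext hm.symm heq)
    · exact hk (Set.mem_biUnion hx ⟨hd, heq⟩)
  choose ν h1 h2 using hν
  obtain ⟨c, hc0, hcu⟩ : ∃ c : R, c ≠ 0 ∧ ¬ IsUnit c := by
    by_contra h
    push_neg at h
    exact hnf ⟨exists_pair_ne R, mul_comm, fun ha => (h _ ha).exists_right_inv⟩
  set P := ∏ i : Fin N, ∏ x ∈ T, (x.2.2.1 - x.2.2.2 + ν i * (x.2.1 - x.1)) with hPdef
  have hP : P ≠ 0 :=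
    Finset.prod_ne_zero_iff.mpr fun i _ =>
      Finset.prod_ne_zero_iff.mpr fun x hx => h2 i x hx
  refine ⟨ν, M * c * P, mul_ne_zero (mul_ne_zero hM hc0) hP, h1,
    Ideal.mem_span_singleton.mpr ⟨c * P, by ring⟩, ?_⟩
  intro i x hx hmem
  obtain ⟨s, hs⟩ := Ideal.mem_span_singleton.mp hmem
  have hdvd : (x.2.2.1 - x.2.2.2 + ν i * (x.2.1 - x.1)) ∣ P :=
    dvd_trans
      (Finset.dvd_prod_of_mem (fun y => y.2.2.1 - y.2.2.2 + ν i * (y.2.1 - y.1)) hx)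
      (Finset.dvd_prod_of_mem
        (fun j => ∏ y ∈ T, (y.2.2.1 - y.2.2.2 + ν j * (y.2.1 - y.1)))
        (Finset.mem_univ i))
  obtain ⟨t, ht⟩ := dvd_trans ⟨s, hs⟩ hdvd
  have h1' : P * 1 = P * (M * c * t) := by linear_combination ht
  have := mul_left_cancel₀ hP h1'
  exact hcu (IsUnit.of_mul_eq_one (a := c) (M * t) (by linear_combination -this))
end

section
/- The intersection 𝔬̂^* ∩ U equals the closure in 𝔸_K^× of the set of global units u ∈ 𝔬^* satisfying σ(u) > 0 for every real place σ of K, each such u being embedded into 𝔬̂^* diagonally at the finite places (and with component 1 at the infinite places). -/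
set_option synthInstance.maxHeartbeats 1000000
set_option maxHeartbeats 1000000

open NumberField IsDedekindDomain
open scoped Pointwise

/-- The diagonal embedding of `K^×` into the idele group `𝔸_K^×`. -/
def KDiag (K : Type*) [Field K] [NumberField K] : Set (AdeleRing (𝓞 K) K)ˣ :=
  Set.range (Units.map (algebraMap K (AdeleRing (𝓞 K) K)).toMonoidHom)

/-- `K_∞^×`: the subgroup of ideles whose component at every finite place is `1`. -/
def KInf (K : Type*) [Field K] [NumberField K] : Set (AdeleRing (𝓞 K) K)ˣ :=
  {x : (AdeleRing (𝓞 K) K)ˣ | ((x : AdeleRing (𝓞 K) K)).2 = 1}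

/-- `K_{∞,+}^×`: the ideles whose component at every finite place is `1` and whose
component at every real place is positive. -/
def KInfPlus (K : Type*) [Field K] [NumberField K] : Set (AdeleRing (𝓞 K) K)ˣ :=
  {x : (AdeleRing (𝓞 K) K)ˣ | ((x : AdeleRing (𝓞 K) K)).2 = 1 ∧
    ∀ (v : InfinitePlace K) (hv : v.IsReal),
      0 < InfinitePlace.Completion.extensionEmbeddingOfIsReal hv
        (((x : AdeleRing (𝓞 K) K)).1 v)}

/-- `𝔬̂^* = ∏_v 𝔬_v^*`: the ideles whose component at every infinite place is `1` and
whose component at each finite place `v` is a unit of the valuation ring `𝔬_v`. -/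
def OhatStar (K : Type*) [Field K] [NumberField K] : Set (AdeleRing (𝓞 K) K)ˣ :=
  {x : (AdeleRing (𝓞 K) K)ˣ | ((x : AdeleRing (𝓞 K) K)).1 = 1 ∧
    ∀ v : HeightOneSpectrum (𝓞 K), ∃ u : (v.adicCompletionIntegers K)ˣ,
      (((x : AdeleRing (𝓞 K) K)).2 : IsDedekindDomain.FiniteAdeleRing (𝓞 K) K) v =
        ((u : v.adicCompletionIntegers K) : v.adicCompletion K)}

/-- `U`: the closure of `K^× · K_{∞,+}^×` in the idele group. -/
def Uclosure (K : Type*) [Field K] [NumberField K] : Set (AdeleRing (𝓞 K) K)ˣ :=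
  closure (KDiag K * KInfPlus K)
/-- The embedding of `K^×` into the ideles placing `k` diagonally at the finite places
and `1` at the infinite places. -/
noncomputable def finUnitIdele (K : Type*) [Field K] [NumberField K] (u : Kˣ) : (AdeleRing (𝓞 K) K)ˣ where
  val := (1, algebraMap K (IsDedekindDomain.FiniteAdeleRing (𝓞 K) K) (u : K))
  inv := (1, algebraMap K (IsDedekindDomain.FiniteAdeleRing (𝓞 K) K) ((u⁻¹ : Kˣ) : K))
  val_inv := by
    change ((1 : InfiniteAdeleRing K), algebraMap K (IsDedekindDomain.FiniteAdeleRing (𝓞 K) K) (u : K)) *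
      ((1 : InfiniteAdeleRing K), algebraMap K (IsDedekindDomain.FiniteAdeleRing (𝓞 K) K) ((u⁻¹ : Kˣ) : K)) =
      (1 : InfiniteAdeleRing K × IsDedekindDomain.FiniteAdeleRing (𝓞 K) K)
    rw [Prod.mk_mul_mk, one_mul, ← map_mul, Units.mul_inv, map_one]
    rfl
  inv_val := by
    change ((1 : InfiniteAdeleRing K), algebraMap K (IsDedekindDomain.FiniteAdeleRing (𝓞 K) K) ((u⁻¹ : Kˣ) : K)) *
      ((1 : InfiniteAdeleRing K), algebraMap K (IsDedekindDomain.FiniteAdeleRing (𝓞 K) K) (u : K)) =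
      (1 : InfiniteAdeleRing K × IsDedekindDomain.FiniteAdeleRing (𝓞 K) K)
    rw [Prod.mk_mul_mk, one_mul, ← map_mul, Units.inv_mul, map_one]
    rfl

/-! ### Auxiliary lemmas -/

section Aux

open IsDedekindDomain.HeightOneSpectrum

open scoped Classical in
lemma my_dvd_of_count_le {R : Type*} [CommRing R] [IsDedekindDomain R] {r s : R}
    (hr : r ≠ 0) (hs : s ≠ 0)
    (h : ∀ v : HeightOneSpectrum R,
      (Associates.mk v.asIdeal).count (Associates.mk (Ideal.span {s})).factors ≤
      (Associates.mk v.asIdeal).count (Associates.mk (Ideal.span {r})).factors) :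
    s ∣ r := by
  have hsb : Ideal.span {s} ≠ (⊥ : Ideal R) := by
    simpa [Ideal.span_singleton_eq_bot] using hs
  have hrb : Ideal.span {r} ≠ (⊥ : Ideal R) := by
    simpa [Ideal.span_singleton_eq_bot] using hr
  suffices hdvd : Ideal.span {s} ∣ Ideal.span ({r} : Set R) by
    exact Ideal.mem_span_singleton.mp (Ideal.dvd_iff_le.mp hdvd
      (Ideal.mem_span_singleton.mpr dvd_rfl))
  rw [← Associates.mk_le_mk_iff_dvd,
    ← Associates.factors_le, Associates.factors_mk _ hsb, Associates.factors_mk _ hrb,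
    WithTop.coe_le_coe, Multiset.le_iff_count]
  rintro ⟨p, hp⟩
  obtain ⟨J, rfl⟩ := Associates.mk_surjective p
  have hJirr : Irreducible J := Associates.irreducible_mk.mp hp
  have hJprime : Prime J := UniqueFactorizationMonoid.irreducible_iff_prime.mp hJirr
  set v : HeightOneSpectrum R := ⟨J, Ideal.isPrime_of_prime hJprime, hJprime.ne_zero⟩
  have := h v
  rwa [Associates.factors_mk _ hsb, Associates.factors_mk _ hrb,
    Associates.count_some hp, Associates.count_some hp] at this

open scoped Classical in
lemma my_exists_algebraMap_eq {R K : Type*} [CommRing R] [IsDedekindDomain R]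
    [Field K] [Algebra R K] [IsFractionRing R K] (x : K)
    (h : ∀ v : HeightOneSpectrum R, v.valuation K x ≤ 1) :
    ∃ r : R, algebraMap R K r = x := by
  obtain ⟨⟨r, s⟩, rfl⟩ := IsLocalization.mk'_surjective (nonZeroDivisors R) x
  by_cases hr : r = 0
  · exact ⟨0, by simp [hr]⟩
  have hs : (s : R) ≠ 0 := nonZeroDivisors.coe_ne_zero s
  have key : ∀ v : HeightOneSpectrum R, v.intValuation r ≤ v.intValuation (s : R) := by
    intro v
    have h1 := h v
    rw [valuation_of_mk'] at h1
    have hs0 : (0 : WithZero (Multiplicative ℤ)) < v.intValuation (s : R) := by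
      rw [zero_lt_iff, intValuation_apply]
      exact v.intValuation_ne_zero _ hs
    exact (div_le_one₀ hs0).mp h1
  have hdvd : (s : R) ∣ r := by
    apply my_dvd_of_count_le hr hs
    intro v
    have h1 := key v
    rw [intValuation_apply, intValuation_apply, v.intValuationDef_if_neg hr,
      v.intValuationDef_if_neg hs] at h1
    rw [WithZero.exp_le_exp, neg_le_neg_iff, Int.ofNat_le] at h1
    exact h1
  obtain ⟨t, rfl⟩ := hdvd
  refine ⟨t, ?_⟩
  rw [eq_comm, IsLocalization.mk'_eq_iff_eq_mul, ← map_mul]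
  ring_nf

lemma my_isOpen_intSet {R K : Type*} [CommRing R] [IsDedekindDomain R]
    [Field K] [Algebra R K] [IsFractionRing R K] :
    IsOpen {a : FiniteAdeleRing R K | ∀ v, a v ∈ v.adicCompletionIntegers K} := by
  exact RestrictedProduct.isOpen_forall_mem (fun v => Valued.isOpen_valuationSubring _)

lemma my_isClosed_intSet {R K : Type*} [CommRing R] [IsDedekindDomain R]
    [Field K] [Algebra R K] [IsFractionRing R K] :
    IsClosed {a : FiniteAdeleRing R K | ∀ v, a v ∈ v.adicCompletionIntegers K} := by
  have : {a : FiniteAdeleRing R K | ∀ v, a v ∈ v.adicCompletionIntegers K} =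
      ⋂ v, (fun a : FiniteAdeleRing R K => a v) ⁻¹' (v.adicCompletionIntegers K : Set _) := by
    ext a; simp
  rw [this]
  exact isClosed_iInter fun v =>
    (Valued.isClosed_valuationSubring _).preimage (RestrictedProduct.continuous_eval v)

lemma my_units_nhds {A : Type*} [Monoid A] [TopologicalSpace A] {x : Aˣ} {W : Set Aˣ}
    (hW : W ∈ nhds x) :
    ∃ P ∈ nhds (x : A), ∃ Q ∈ nhds ((x⁻¹ : Aˣ) : A),
      ∀ y : Aˣ, (y : A) ∈ P → ((y⁻¹ : Aˣ) : A) ∈ Q → y ∈ W := by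
  rw [Units.isInducing_embedProduct.nhds_eq_comap, Filter.mem_comap] at hW
  obtain ⟨T, hT, hTW⟩ := hW
  obtain ⟨P, hP, Q', hQ', hsub⟩ := mem_nhds_prod_iff.mp hT
  refine ⟨P, hP, MulOpposite.op ⁻¹' Q', ?_, fun y hy1 hy2 => hTW (hsub ⟨hy1, hy2⟩)⟩
  rw [← MulOpposite.map_op_nhds] at hQ'
  exact hQ'

/-- Every real embedding `σ : K →+* ℝ` arises as `embedding_of_isReal` of a real place. -/
lemma my_exists_place (K : Type*) [Field K] [NumberField K] (σ : K →+* ℝ) :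
    ∃ (v : InfinitePlace K) (hv : v.IsReal),
      NumberField.InfinitePlace.embedding_of_isReal hv = σ := by
  have hφ : NumberField.ComplexEmbedding.IsReal (Complex.ofRealHom.comp σ) := by
    rw [NumberField.ComplexEmbedding.isReal_iff]
    ext x
    simp [NumberField.ComplexEmbedding.conjugate, Complex.conj_ofReal]
  refine ⟨NumberField.InfinitePlace.mk (Complex.ofRealHom.comp σ),
    ⟨Complex.ofRealHom.comp σ, hφ, rfl⟩, ?_⟩
  ext x
  have h1 : ((NumberField.InfinitePlace.embedding_of_isReal
      (⟨Complex.ofRealHom.comp σ, hφ, rfl⟩ :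
        (NumberField.InfinitePlace.mk (Complex.ofRealHom.comp σ)).IsReal)) x : ℂ) =
      (NumberField.InfinitePlace.embedding
        (NumberField.InfinitePlace.mk (Complex.ofRealHom.comp σ))) x :=
    NumberField.InfinitePlace.embedding_of_isReal_apply _ x
  rw [NumberField.InfinitePlace.embedding_mk_eq_of_isReal hφ] at h1
  simp only [RingHom.comp_apply, Complex.ofRealHom_eq_coe] at h1
  exact_mod_cast h1

end Aux

section MainAux

open IsDedekindDomain.HeightOneSpectrum NumberField.InfinitePlace.Completion

variable {K : Type*} [Field K] [NumberField K]

lemma my_adele_fst_mul (a b : AdeleRing (𝓞 K) K) : (a * b).1 = a.1 * b.1 := rfl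

lemma my_adele_snd_mul (a b : AdeleRing (𝓞 K) K) : (a * b).2 = a.2 * b.2 := rfl

lemma my_fin_mul_apply (a b : FiniteAdeleRing (𝓞 K) K) (v : HeightOneSpectrum (𝓞 K)) :
    (((a * b : FiniteAdeleRing (𝓞 K) K))) v =
      ((a) v) * ((b) v) := rfl

lemma my_unit_val_mul_inv_fin (x : (AdeleRing (𝓞 K) K)ˣ) (v : HeightOneSpectrum (𝓞 K)) :
    (((x : AdeleRing (𝓞 K) K)).2) v *
      ((((x⁻¹ : (AdeleRing (𝓞 K) K)ˣ) : AdeleRing (𝓞 K) K)).2) v = 1 := by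
  have h : (x : AdeleRing (𝓞 K) K) * ((x⁻¹ : (AdeleRing (𝓞 K) K)ˣ) : AdeleRing (𝓞 K) K) = 1 := Units.mul_inv_eq_one.mpr rfl
  have h2 : ((x : AdeleRing (𝓞 K) K)).2 * (((x⁻¹ : (AdeleRing (𝓞 K) K)ˣ) : AdeleRing (𝓞 K) K)).2 = 1 :=
    congrArg Prod.snd h
  have := congrArg (fun a : FiniteAdeleRing (𝓞 K) K =>
    ((a)) v) h2
  exact this

/-- Characterisation of membership in `OhatStar`. -/
lemma my_mem_OhatStar_iff (x : (AdeleRing (𝓞 K) K)ˣ) :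
    x ∈ OhatStar K ↔ ((x : AdeleRing (𝓞 K) K)).1 = 1 ∧
      (∀ v : HeightOneSpectrum (𝓞 K),
        (((x : AdeleRing (𝓞 K) K)).2) v ∈ v.adicCompletionIntegers K) ∧
      (∀ v : HeightOneSpectrum (𝓞 K),
        ((((x⁻¹ : (AdeleRing (𝓞 K) K)ˣ) : AdeleRing (𝓞 K) K)).2) v ∈
          v.adicCompletionIntegers K) := by
  constructor
  · rintro ⟨h1, hex⟩
    refine ⟨h1, fun v => ?_, fun v => ?_⟩
    · obtain ⟨u, hu⟩ := hex v
      rw [hu]; exact SetLike.coe_mem _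
    · obtain ⟨u, hu⟩ := hex v
      have hmul := my_unit_val_mul_inv_fin x v
      rw [hu] at hmul
      have huu : ((u : v.adicCompletionIntegers K) : v.adicCompletion K) *
          (((u⁻¹ : (v.adicCompletionIntegers K)ˣ) : v.adicCompletionIntegers K) :
            v.adicCompletion K) = 1 := by
        have h0 : ((u * u⁻¹ : (v.adicCompletionIntegers K)ˣ) :
            v.adicCompletionIntegers K) = 1 := by
          rw [mul_inv_cancel]; rfl
        have h1 := congrArg (fun z : v.adicCompletionIntegers K => (z : v.adicCompletion K)) h0
        simp only [Units.val_mul] at h1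
        exact_mod_cast h1
      have heq : ((((x⁻¹ : (AdeleRing (𝓞 K) K)ˣ) : AdeleRing (𝓞 K) K)).2) v =
          (((u⁻¹ : (v.adicCompletionIntegers K)ˣ) : v.adicCompletionIntegers K) :
            v.adicCompletion K) :=
        (inv_eq_of_mul_eq_one_right hmul).symm.trans (inv_eq_of_mul_eq_one_right huu)
      rw [heq]; exact SetLike.coe_mem _
  · rintro ⟨h1, h2, h3⟩
    refine ⟨h1, fun v => ?_⟩
    refine ⟨⟨⟨_, h2 v⟩, ⟨_, h3 v⟩, ?_, ?_⟩, rfl⟩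
    · exact Subtype.ext (my_unit_val_mul_inv_fin x v)
    · exact Subtype.ext (by
        show ((((x⁻¹ : (AdeleRing (𝓞 K) K)ˣ) : AdeleRing (𝓞 K) K)).2) v *
          (((x : AdeleRing (𝓞 K) K)).2) v = 1
        rw [mul_comm]
        exact my_unit_val_mul_inv_fin x v)

instance : T2Space (NumberField.InfiniteAdeleRing K) :=
  inferInstanceAs (T2Space ((v : NumberField.InfinitePlace K) → v.Completion))

lemma my_isClosed_OhatStar : IsClosed (OhatStar K) := by
  have : OhatStar K =
      ((fun x : (AdeleRing (𝓞 K) K)ˣ => ((x : AdeleRing (𝓞 K) K)).1) ⁻¹' {1}) ∩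
      ((fun x : (AdeleRing (𝓞 K) K)ˣ => ((x : AdeleRing (𝓞 K) K)).2) ⁻¹'
        {a : FiniteAdeleRing (𝓞 K) K | ∀ v, a v ∈ v.adicCompletionIntegers K}) ∩
      ((fun x : (AdeleRing (𝓞 K) K)ˣ => (((x⁻¹ : (AdeleRing (𝓞 K) K)ˣ) : AdeleRing (𝓞 K) K)).2) ⁻¹'
        {a : FiniteAdeleRing (𝓞 K) K | ∀ v, a v ∈ v.adicCompletionIntegers K}) := by
    ext x
    rw [my_mem_OhatStar_iff]
    constructor
    · rintro ⟨h1, h2, h3⟩; exact ⟨⟨h1, h2⟩, h3⟩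
    · rintro ⟨⟨h1, h2⟩, h3⟩; exact ⟨h1, h2, h3⟩
  rw [this]
  have hc1 : Continuous (fun x : (AdeleRing (𝓞 K) K)ˣ => ((x : AdeleRing (𝓞 K) K)).1) :=
    continuous_fst.comp Units.continuous_val
  have hc2 : Continuous (fun x : (AdeleRing (𝓞 K) K)ˣ => ((x : AdeleRing (𝓞 K) K)).2) :=
    continuous_snd.comp Units.continuous_val
  have hc3 : Continuous (fun x : (AdeleRing (𝓞 K) K)ˣ =>
      (((x⁻¹ : (AdeleRing (𝓞 K) K)ˣ) : AdeleRing (𝓞 K) K)).2) :=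
    continuous_snd.comp Units.continuous_coe_inv
  exact ((IsClosed.preimage hc1 isClosed_singleton).inter
    (IsClosed.preimage hc2 my_isClosed_intSet)).inter
    (IsClosed.preimage hc3 my_isClosed_intSet)

end MainAux

/-- `𝔬̂^* ∩ U` equals the closure in `𝔸_K^×` of the set of global units
`u ∈ 𝔬^*` with `σ(u) > 0` for every real place `σ` of `K`, embedded diagonally at the
finite places and trivially at the infinite places. -/
theorem OhatStar_inter_Uclosure (K : Type*) [Field K] [NumberField K] :
    OhatStar K ∩ Uclosure K =
      closure ((fun u : (𝓞 K)ˣ =>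
          finUnitIdele K (Units.map (algebraMap (𝓞 K) K).toMonoidHom u)) ''
        {u : (𝓞 K)ˣ | ∀ σ : K →+* ℝ, 0 < σ (algebraMap (𝓞 K) K (u : 𝓞 K))}) := by
  open IsDedekindDomain.HeightOneSpectrum NumberField.InfinitePlace
    NumberField.InfinitePlace.Completion in
  refine subset_antisymm ?_ ?_
  · rintro x ⟨hxO, hxU⟩
    obtain ⟨h1, h2, h3⟩ := (my_mem_OhatStar_iff x).mp hxO
    have h1' : (((x⁻¹ : (AdeleRing (𝓞 K) K)ˣ) : AdeleRing (𝓞 K) K)).1 = 1 := by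
      have h : ((x : AdeleRing (𝓞 K) K) * ((x⁻¹ : (AdeleRing (𝓞 K) K)ˣ) : AdeleRing (𝓞 K) K)).1 = 1 := by
        rw [Units.mul_inv]; rfl
      rwa [my_adele_fst_mul, h1, one_mul] at h
    rw [mem_closure_iff_nhds]
    intro W hW
    obtain ⟨P, hP, Q, hQ, hPQ⟩ := my_units_nhds hW
    obtain ⟨P₁, hP₁, P₂, hP₂, hP12⟩ := mem_nhds_prod_iff.mp hP
    obtain ⟨Q₁, hQ₁, Q₂, hQ₂, hQ12⟩ := mem_nhds_prod_iff.mp hQ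
    set IntSet : Set (FiniteAdeleRing (𝓞 K) K) :=
      {a : FiniteAdeleRing (𝓞 K) K | ∀ v, a v ∈ v.adicCompletionIntegers K} with hIntSet
    set PosSet : Set (AdeleRing (𝓞 K) K)ˣ :=
      {y : (AdeleRing (𝓞 K) K)ˣ | ∀ (v : InfinitePlace K) (hv : v.IsReal),
        0 < extensionEmbeddingOfIsReal hv (((y : AdeleRing (𝓞 K) K)).1 v)} with hPosSet
    have hcont2 : Continuous (fun y : (AdeleRing (𝓞 K) K)ˣ => ((y : AdeleRing (𝓞 K) K)).2) :=
      continuous_snd.comp Units.continuous_val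
    have hcont3 : Continuous (fun y : (AdeleRing (𝓞 K) K)ˣ =>
        (((y⁻¹ : (AdeleRing (𝓞 K) K)ˣ) : AdeleRing (𝓞 K) K)).2) :=
      continuous_snd.comp Units.continuous_coe_inv
    have hIntNhds : IntSet ∈ nhds ((x : AdeleRing (𝓞 K) K)).2 :=
      my_isOpen_intSet.mem_nhds (fun v => h2 v)
    have hIntNhds' : IntSet ∈ nhds (((x⁻¹ : (AdeleRing (𝓞 K) K)ˣ) : AdeleRing (𝓞 K) K)).2 :=
      my_isOpen_intSet.mem_nhds (fun v => h3 v)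
    have hPosNhds : PosSet ∈ nhds x := by
      refine IsOpen.mem_nhds ?_ ?_
      · have hset : PosSet = ⋂ (p : {v : InfinitePlace K // v.IsReal}),
            {y : (AdeleRing (𝓞 K) K)ˣ |
              0 < extensionEmbeddingOfIsReal p.2 (((y : AdeleRing (𝓞 K) K)).1 p.1)} := by
          ext y
          simp only [hPosSet, Set.mem_setOf_eq, Set.mem_iInter]
          exact ⟨fun h p => h p.1 p.2, fun h v hv => h ⟨v, hv⟩⟩
        rw [hset]
        refine isOpen_iInter_of_finite fun p => ?_
        have hc : Continuous (fun y : (AdeleRing (𝓞 K) K)ˣ =>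
            extensionEmbeddingOfIsReal p.2 (((y : AdeleRing (𝓞 K) K)).1 p.1)) :=
          (isometry_extensionEmbeddingOfIsReal p.2).continuous.comp
            ((continuous_apply p.1).comp (continuous_fst.comp Units.continuous_val))
        exact IsOpen.preimage hc isOpen_Ioi
      · intro v hv
        rw [h1]
        show (0 : ℝ) < extensionEmbeddingOfIsReal hv 1
        rw [map_one]
        exact zero_lt_one
    have hO : ((fun y : (AdeleRing (𝓞 K) K)ˣ => ((y : AdeleRing (𝓞 K) K)).2) ⁻¹' (P₂ ∩ IntSet) ∩
        (fun y : (AdeleRing (𝓞 K) K)ˣ => (((y⁻¹ : (AdeleRing (𝓞 K) K)ˣ) : AdeleRing (𝓞 K) K)).2) ⁻¹'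
          (Q₂ ∩ IntSet)) ∩ PosSet ∈ nhds x := by
      refine Filter.inter_mem (Filter.inter_mem ?_ ?_) hPosNhds
      · exact hcont2.continuousAt.preimage_mem_nhds (Filter.inter_mem hP₂ hIntNhds)
      · exact hcont3.continuousAt.preimage_mem_nhds (Filter.inter_mem hQ₂ hIntNhds')
    obtain ⟨y, ⟨⟨hyA, hyB⟩, hyC⟩, hyDW⟩ := mem_closure_iff_nhds.mp hxU _ hO
    obtain ⟨d, hd, w, hw, hdw⟩ := hyDW
    obtain ⟨ku, rfl⟩ := hd
    have hyA1 : ((y : AdeleRing (𝓞 K) K)).2 ∈ P₂ := hyA.1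
    have hyA2 : ∀ v : HeightOneSpectrum (𝓞 K),
        (((y : AdeleRing (𝓞 K) K)).2) v ∈
          v.adicCompletionIntegers K := hyA.2
    have hyB1 : (((y⁻¹ : (AdeleRing (𝓞 K) K)ˣ) : AdeleRing (𝓞 K) K)).2 ∈ Q₂ := hyB.1
    have hyB2 : ∀ v : HeightOneSpectrum (𝓞 K),
        ((((y⁻¹ : (AdeleRing (𝓞 K) K)ˣ) : AdeleRing (𝓞 K) K)).2) v ∈
          v.adicCompletionIntegers K := hyB.2
    have hwfin : ((w : AdeleRing (𝓞 K) K)).2 = 1 := hw.1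
    have hwinv : (((w⁻¹ : (AdeleRing (𝓞 K) K)ˣ) : AdeleRing (𝓞 K) K)).2 = 1 := by
      have h : ((w : AdeleRing (𝓞 K) K) * ((w⁻¹ : (AdeleRing (𝓞 K) K)ˣ) : AdeleRing (𝓞 K) K)).2 = 1 := by
        rw [Units.mul_inv]; rfl
      rwa [my_adele_snd_mul, hwfin, one_mul] at h
    have hyval2 : ((y : AdeleRing (𝓞 K) K)).2 =
        algebraMap K (FiniteAdeleRing (𝓞 K) K) (ku : K) := by
      rw [← hdw, Units.val_mul, my_adele_snd_mul, hwfin, mul_one]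
      rfl
    have hyinv2 : (((y⁻¹ : (AdeleRing (𝓞 K) K)ˣ) : AdeleRing (𝓞 K) K)).2 =
        algebraMap K (FiniteAdeleRing (𝓞 K) K) ((ku⁻¹ : Kˣ) : K) := by
      rw [← hdw, mul_inv_rev, Units.val_mul, my_adele_snd_mul, hwinv, one_mul]
      rfl
    have hvk : ∀ v : HeightOneSpectrum (𝓞 K), v.valuation K ((ku : Kˣ) : K) ≤ 1 := by
      intro v
      have hmem := hyA2 v
      rw [hyval2] at hmem
      rw [← valuedAdicCompletion_eq_valuation' v ((ku : Kˣ) : K)]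
      exact hmem
    have hvk' : ∀ v : HeightOneSpectrum (𝓞 K), v.valuation K ((ku⁻¹ : Kˣ) : K) ≤ 1 := by
      intro v
      have hmem := hyB2 v
      rw [hyinv2] at hmem
      rw [← valuedAdicCompletion_eq_valuation' v ((ku⁻¹ : Kˣ) : K)]
      exact hmem
    obtain ⟨r, hr⟩ := my_exists_algebraMap_eq _ hvk
    obtain ⟨r', hr'⟩ := my_exists_algebraMap_eq _ hvk'
    have hinj := IsFractionRing.injective (𝓞 K) K
    have hrr' : r * r' = 1 := by
      apply hinj
      rw [map_mul, hr, hr', map_one]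
      exact_mod_cast Units.mul_inv ku
    have hr'r : r' * r = 1 := by rw [mul_comm]; exact hrr'
    have hupos : (⟨r, r', hrr', hr'r⟩ : (𝓞 K)ˣ) ∈
        {u : (𝓞 K)ˣ | ∀ σ : K →+* ℝ, 0 < σ (algebraMap (𝓞 K) K (u : 𝓞 K))} := by
      intro σ
      obtain ⟨v, hv, hσ⟩ := my_exists_place K σ
      have hyv := hyC v hv
      have hy1v : ((y : AdeleRing (𝓞 K) K)).1 v =
          (((ku : Kˣ) : K) : v.Completion) * ((w : AdeleRing (𝓞 K) K)).1 v := by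
        rw [← hdw, Units.val_mul, my_adele_fst_mul]
        rfl
      rw [hy1v, map_mul] at hyv
      have hwv := hw.2 v hv
      have hext : extensionEmbeddingOfIsReal hv ((((ku : Kˣ) : K)) : v.Completion) =
          σ ((ku : Kˣ) : K) := by
        rw [extensionEmbeddingOfIsReal_coe, hσ]
        rfl
      have hkpos : 0 < σ ((ku : Kˣ) : K) := by
        rw [← hext]
        nlinarith [hyv, hwv]
      show 0 < σ (algebraMap (𝓞 K) K r)
      rwa [hr]
    refine ⟨finUnitIdele K (Units.map (algebraMap (𝓞 K) K).toMonoidHom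
      (⟨r, r', hrr', hr'r⟩ : (𝓞 K)ˣ)), ?_, Set.mem_image_of_mem _ hupos⟩
    have hP₁' : P₁ ∈ nhds (1 : InfiniteAdeleRing K) := by
      have e : ((x : AdeleRing (𝓞 K) K)).1 = 1 := h1
      exact e ▸ hP₁
    have hQ₁' : Q₁ ∈ nhds (1 : InfiniteAdeleRing K) := by
      have e : (((x⁻¹ : (AdeleRing (𝓞 K) K)ˣ) : AdeleRing (𝓞 K) K)).1 = 1 := h1'
      exact e ▸ hQ₁
    apply hPQ
    · apply hP12
      refine ⟨mem_of_mem_nhds hP₁', ?_⟩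
      show algebraMap K (FiniteAdeleRing (𝓞 K) K) (algebraMap (𝓞 K) K r) ∈ P₂
      rw [hr, ← hyval2]
      exact hyA1
    · apply hQ12
      refine ⟨mem_of_mem_nhds hQ₁', ?_⟩
      show algebraMap K (FiniteAdeleRing (𝓞 K) K) (algebraMap (𝓞 K) K r') ∈ Q₂
      rw [hr', ← hyinv2]
      exact hyB1
  · refine closure_minimal ?_ (my_isClosed_OhatStar.inter isClosed_closure)
    rintro z ⟨u0, hu0, rfl⟩
    constructor
    · rw [my_mem_OhatStar_iff]
      refine ⟨rfl, fun v => ?_, fun v => ?_⟩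
      · show ((algebraMap (𝓞 K) K ((u0 : (𝓞 K)ˣ) : 𝓞 K) : K) : v.adicCompletion K) ∈
          v.adicCompletionIntegers K
        rw [mem_adicCompletionIntegers, valuedAdicCompletion_eq_valuation']
        exact v.valuation_le_one _
      · show ((algebraMap (𝓞 K) K ((u0⁻¹ : (𝓞 K)ˣ) : 𝓞 K) : K) : v.adicCompletion K) ∈
          v.adicCompletionIntegers K
        rw [mem_adicCompletionIntegers, valuedAdicCompletion_eq_valuation']
        exact v.valuation_le_one _
    · apply subset_closure
      refine ⟨Units.map (algebraMap K (AdeleRing (𝓞 K) K)).toMonoidHom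
        (Units.map (algebraMap (𝓞 K) K).toMonoidHom u0), ⟨_, rfl⟩,
        (Units.map (algebraMap K (AdeleRing (𝓞 K) K)).toMonoidHom
          (Units.map (algebraMap (𝓞 K) K).toMonoidHom u0))⁻¹ *
          finUnitIdele K (Units.map (algebraMap (𝓞 K) K).toMonoidHom u0), ⟨?_, ?_⟩,
        mul_inv_cancel_left _ _⟩
      · rw [Units.val_mul, my_adele_snd_mul]
        show algebraMap K (FiniteAdeleRing (𝓞 K) K)
            (algebraMap (𝓞 K) K ((u0⁻¹ : (𝓞 K)ˣ) : 𝓞 K)) *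
          algebraMap K (FiniteAdeleRing (𝓞 K) K)
            (algebraMap (𝓞 K) K ((u0 : (𝓞 K)ˣ) : 𝓞 K)) = 1
        rw [← map_mul, ← map_mul]
        norm_cast
        rw [inv_mul_cancel, Units.val_one, map_one, map_one]
      · intro v hv
        rw [Units.val_mul, my_adele_fst_mul]
        show 0 < extensionEmbeddingOfIsReal hv
          (((algebraMap (𝓞 K) K ((u0⁻¹ : (𝓞 K)ˣ) : 𝓞 K) : K) : v.Completion) * 1)
        rw [mul_one, extensionEmbeddingOfIsReal_coe]
        change 0 < embedding_of_isReal hv (algebraMap (𝓞 K) K ((u0⁻¹ : (𝓞 K)ˣ) : 𝓞 K))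
        have h1 := hu0 (embedding_of_isReal hv)
        have h2 : embedding_of_isReal hv (algebraMap (𝓞 K) K ((u0 : (𝓞 K)ˣ) : 𝓞 K)) *
            embedding_of_isReal hv (algebraMap (𝓞 K) K ((u0⁻¹ : (𝓞 K)ˣ) : 𝓞 K)) = 1 := by
          rw [← map_mul, ← map_mul]
          norm_cast
          rw [mul_inv_cancel, Units.val_one, map_one, map_one]
        nlinarith [h1, h2]
end
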